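/- For the φ6-random Boolean cellular automaton on the circle of size N (every cell uses the deterministic rule φ6(x,y) = x XOR y; the initial states X_i(0), i ∈ ℤ/Nℤ, are i.i.d. Bernoulli(1/2)), let σ_N be the probability that cell 0 stabilizes. Then liminf_{N→∞} σ_N = 0 and limsup_{N→∞} σ_N = 1. -/

import Mathlib

open MeasureTheory ProbabilityTheory Filter
open scoped ENNReal

/-- A Boolean rule: a function `{0,1} × {0,1} → {0,1}`. -/
abbrev Rule : Type := Bool → Bool → Bool

/-- The rule `φ6(x,y) = x + y mod 2`, i.e. XOR. -/
def phi6 : Rule := fun x y => xor x y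

/-- Evolution of an inhomogeneous cellular automaton on the circle ℤ/Nℤ:
`x_i(t+1) = φ_i(x_{i-1}(t), x_{i+1}(t))`, indices mod `N`. -/
def evolveC (N : ℕ) (φ : ZMod N → Rule) (x0 : ZMod N → Bool) : ℕ → ZMod N → Bool
  | 0 => x0
  | t+1 => fun i => φ i (evolveC N φ x0 t (i-1)) (evolveC N φ x0 t (i+1))

/-- A trajectory `t ↦ x(t)` stabilizes if it is eventually constant. -/
def Stabilizes (x : ℕ → Bool) : Prop := ∃ T, ∀ t, T ≤ t → x t = x T

lemma evolveC_add (N : ℕ) (φ : ZMod N → Rule) (x0 : ZMod N → Bool) (s t : ℕ) :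
    evolveC N φ x0 (s + t) = evolveC N φ (evolveC N φ x0 s) t := by
  induction t with
  | zero => rfl
  | succ t ih =>
    show evolveC N φ x0 ((s + t) + 1) = _
    funext i
    simp only [evolveC, ih]

lemma evolveC_false (N : ℕ) (t : ℕ) :
    evolveC N (fun _ => phi6) (fun _ => false) t = fun _ => false := by
  induction t with
  | zero => rfl
  | succ t ih => funext i; simp [evolveC, ih, phi6]

lemma evolveC_pow2 (N : ℕ) (x0 : ZMod N → Bool) (k : ℕ) (i : ZMod N) :
    evolveC N (fun _ => phi6) x0 (2 ^ k) i
      = xor (x0 (i - ((2 ^ k : ℕ) : ZMod N))) (x0 (i + ((2 ^ k : ℕ) : ZMod N))) := by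
  induction k generalizing x0 i with
  | zero =>
    show evolveC N (fun _ => phi6) x0 1 i = _
    simp only [evolveC, phi6]
    norm_num
  | succ k ih =>
    have h2 : (2 : ℕ) ^ (k + 1) = 2 ^ k + 2 ^ k := by ring
    rw [h2, evolveC_add]
    rw [ih]
    rw [ih, ih]
    have hc : ((2 ^ k + 2 ^ k : ℕ) : ZMod N) = ((2 ^ k : ℕ) : ZMod N) + ((2 ^ k : ℕ) : ZMod N) := by
      push_cast; ring
    rw [hc]
    set c : ZMod N := ((2 ^ k : ℕ) : ZMod N)
    have e1 : i - c - c = i - (c + c) := by ring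
    have e2 : i - c + c = i := by ring
    have e3 : i + c - c = i := by ring
    have e4 : i + c + c = i + (c + c) := by ring
    rw [e1, e2, e3, e4]
    cases x0 (i - (c + c)) <;> cases x0 i <;> cases x0 (i + (c + c)) <;> rfl

/-- On a circle of size `2^n`, everything dies out by time `2^n`. -/
lemma pow2_stabilizes (n : ℕ) (x0 : ZMod (2 ^ n) → Bool) :
    Stabilizes (fun t => evolveC (2 ^ n) (fun _ => phi6) x0 t 0) := by
  have hzero : evolveC (2 ^ n) (fun _ => phi6) x0 (2 ^ n) = fun _ => false := by
    funext i
    rw [evolveC_pow2]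
    have : ((2 ^ n : ℕ) : ZMod (2 ^ n)) = 0 := by exact_mod_cast ZMod.natCast_self (2 ^ n)
    rw [this]
    simp
  refine ⟨2 ^ n, fun t ht => ?_⟩
  have h1 : evolveC (2 ^ n) (fun _ => phi6) x0 t = fun _ => false := by
    have : t = 2 ^ n + (t - 2 ^ n) := by omega
    rw [this, evolveC_add, hzero, evolveC_false]
  show evolveC (2 ^ n) (fun _ => phi6) x0 t 0 = evolveC (2 ^ n) (fun _ => phi6) x0 (2 ^ n) 0
  rw [h1, hzero]

lemma xor_cancel_right' (x y z : Bool) : xor (xor x y) y = x := by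
  cases x <;> cases y <;> rfl

/-- The key probabilistic bound for `N = 2^k + 1`. -/
lemma key_bound {Ω : Type*} [MeasurableSpace Ω] (P : Measure Ω) [IsProbabilityMeasure P]
    (k : ℕ) (hk : 1 ≤ k) {N : ℕ} (hN : N = 2 ^ k + 1)
    (X : ZMod N → Ω → Bool)
    (hmeas : ∀ i, Measurable (X i))
    (hindep : iIndepFun X P)
    (hber : ∀ i, P {ω | X i ω = true} = 1/2) :
    P {ω | Stabilizes (fun t => evolveC N (fun _ => phi6) (fun j => X j ω) t 0)}
      ≤ 2 * 2⁻¹ ^ k := by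
  classical
  -- basic arithmetic in ZMod N
  have hNpos : 0 < N := by rw [hN]; exact Nat.succ_pos _
  have h2k : ((2 : ZMod N)) ^ k = -1 := by
    have h0 : ((2 ^ k + 1 : ℕ) : ZMod N) = 0 := by rw [← hN]; exact ZMod.natCast_self N
    push_cast at h0
    exact eq_neg_of_add_eq_zero_left h0
  have hper : ((2 : ZMod N)) ^ (2 * k) = 1 := by
    rw [two_mul, pow_add, h2k]; ring
  set a : Fin k → ZMod N := fun i => (2 : ZMod N) ^ (i : ℕ) with ha
  set b : Fin k → ZMod N := fun i => -(a i) with hb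
  -- values of a and b
  have hacast : ∀ i : Fin k, a i = ((2 ^ (i : ℕ) : ℕ) : ZMod N) := by
    intro i; push_cast; rfl
  have haval : ∀ i : Fin k, (a i).val = 2 ^ (i : ℕ) := by
    intro i
    rw [hacast i, ZMod.val_natCast]
    apply Nat.mod_eq_of_lt
    have : 2 ^ (i : ℕ) < 2 ^ k := Nat.pow_lt_pow_right (by norm_num) i.2
    omega
  have hbcast : ∀ i : Fin k, b i = ((N - 2 ^ (i : ℕ) : ℕ) : ZMod N) := by
    intro i
    have hle : 2 ^ (i : ℕ) ≤ N := by
      have : 2 ^ (i : ℕ) < 2 ^ k := Nat.pow_lt_pow_right (by norm_num) i.2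
      omega
    have h0 : ((N : ℕ) : ZMod N) = 0 := ZMod.natCast_self N
    rw [Nat.cast_sub hle, h0, ← hacast i]
    simp only [hb]
    ring
  have hbval : ∀ i : Fin k, (b i).val = N - 2 ^ (i : ℕ) := by
    intro i
    rw [hbcast i, ZMod.val_natCast]
    apply Nat.mod_eq_of_lt
    have h1 : 1 ≤ 2 ^ (i : ℕ) := Nat.one_le_two_pow
    omega
  have hbound : ∀ i : Fin k, 2 ^ (i : ℕ) ≤ 2 ^ (k - 1) := by
    intro i
    apply Nat.pow_le_pow_right (by norm_num)
    omega
  have hksum : 2 ^ (k - 1) + 2 ^ (k - 1) = 2 ^ k := by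
    have hk1 : k - 1 + 1 = k := by omega
    calc 2 ^ (k - 1) + 2 ^ (k - 1) = 2 ^ (k - 1) * 2 := by ring
      _ = 2 ^ (k - 1 + 1) := (pow_succ 2 (k - 1)).symm
      _ = 2 ^ k := by rw [hk1]
  -- the injection Fin k ⊕ Fin k → ZMod N
  set ι : Fin k ⊕ Fin k → ZMod N := Sum.elim a b with hι
  have hιinj : Function.Injective ι := by
    intro w w' hww
    have hval : (ι w).val = (ι w').val := by rw [hww]
    rcases w with i | i <;> rcases w' with i' | i' <;>
      simp only [hι, Sum.elim_inl, Sum.elim_inr] at hval ⊢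
    · rw [haval, haval] at hval
      have : (i : ℕ) = (i' : ℕ) := Nat.pow_right_injective (by norm_num) hval
      exact congrArg Sum.inl (Fin.ext this)
    · exfalso
      rw [haval, hbval] at hval
      have h1 := hbound i; have h2 := hbound i'
      have h3 : 1 ≤ 2 ^ (i' : ℕ) := Nat.one_le_two_pow
      omega
    · exfalso
      rw [hbval, haval] at hval
      have h1 := hbound i; have h2 := hbound i'
      have h3 : 1 ≤ 2 ^ (i : ℕ) := Nat.one_le_two_pow
      omega
    · rw [hbval, hbval] at hval
      have h1 := hbound i; have h2 := hbound i'
      have h3 : 1 ≤ 2 ^ (i : ℕ) := Nat.one_le_two_pow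
      have h4 : 1 ≤ 2 ^ (i' : ℕ) := Nat.one_le_two_pow
      have : 2 ^ (i : ℕ) = 2 ^ (i' : ℕ) := by omega
      have : (i : ℕ) = (i' : ℕ) := Nat.pow_right_injective (by norm_num) this
      exact congrArg Sum.inr (Fin.ext this)
  set i0 : Fin k := ⟨0, hk⟩ with hi0
  -- the event E
  set c : Ω → Fin k → Bool := fun ω i => xor (X (b i) ω) (X (a i) ω) with hcdef
  set E : Set Ω := {ω | ∀ i : Fin k, c ω i = c ω i0} with hE
  -- Step 1: stabilization implies E
  have hsub : {ω | Stabilizes (fun t => evolveC N (fun _ => phi6) (fun j => X j ω) t 0)} ⊆ E := by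
    intro ω hω
    obtain ⟨T, hT⟩ := hω
    have hval : ∀ i : Fin k, c ω i
        = evolveC N (fun _ => phi6) (fun j => X j ω) T 0 := by
      intro i
      set t : ℕ := (i : ℕ) + 2 * k * T with htdef
      have hTt : T ≤ 2 ^ t := by
        have h5 : T ≤ 2 * k * T := by
          calc T = 1 * T := (one_mul T).symm
            _ ≤ 2 * k * T := Nat.mul_le_mul_right T (by omega)
        have h1 : T ≤ t := le_trans h5 (Nat.le_add_left _ _)
        calc T ≤ 2 ^ T := (Nat.lt_two_pow_self (n := T)).le
        _ ≤ 2 ^ t := Nat.pow_le_pow_right (by norm_num) h1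
      have hev := evolveC_pow2 N (fun j => X j ω) t 0
      have hcast : ((2 ^ t : ℕ) : ZMod N) = a i := by
        push_cast
        rw [htdef, pow_add, pow_mul, hper, one_pow, mul_one]
      rw [hcast] at hev
      have hTT : evolveC N (fun _ => phi6) (fun j => X j ω) (2 ^ t) 0
          = evolveC N (fun _ => phi6) (fun j => X j ω) T 0 := hT (2 ^ t) hTt
      have hc : c ω i = evolveC N (fun _ => phi6) (fun j => X j ω) (2 ^ t) 0 := by
        rw [hev, zero_sub, zero_add]
      rw [hc]
      exact hTT
    intro i
    rw [hval i, hval i0]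
  -- Step 2: covering E by cylinders
  set S : Finset (ZMod N) := Finset.image ι Finset.univ with hS
  have hScard : S.card = k + k := by
    rw [hS, Finset.card_image_of_injective _ hιinj]
    simp
  set G : (Fin k → Bool × Bool) → ZMod N → Bool := fun v =>
    Function.extend ι (Sum.elim (fun i => (v i).1) (fun i => (v i).2)) (fun _ => true) with hG
  set Cyl : (Fin k → Bool × Bool) → Set Ω := fun v => ⋂ z ∈ S, X z ⁻¹' {G v z} with hCyl
  set V : Finset (Fin k → Bool × Bool) := Finset.univ.filter
    (fun v => ∀ i : Fin k, xor (v i).2 (v i).1 = xor (v i0).2 (v i0).1) with hV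
  have hGa : ∀ v (i : Fin k), G v (a i) = (v i).1 := fun v i =>
    hιinj.extend_apply (Sum.elim (fun i => (v i).1) (fun i => (v i).2)) (fun _ => true)
      (Sum.inl i)
  have hGb : ∀ v (i : Fin k), G v (b i) = (v i).2 := fun v i =>
    hιinj.extend_apply (Sum.elim (fun i => (v i).1) (fun i => (v i).2)) (fun _ => true)
      (Sum.inr i)
  have hcover : E ⊆ ⋃ v ∈ V, Cyl v := by
    intro ω hω
    set v : Fin k → Bool × Bool := fun i => (X (a i) ω, X (b i) ω) with hv
    have hvV : v ∈ V := by
      rw [hV, Finset.mem_filter]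
      refine ⟨Finset.mem_univ _, fun i => hω i⟩
    refine Set.mem_biUnion hvV ?_
    rw [hCyl]
    simp only [Set.mem_iInter]
    intro z hz
    rw [hS] at hz
    obtain ⟨w, _, rfl⟩ := Finset.mem_image.mp hz
    rcases w with i | i
    · exact (hGa v i).symm
    · exact (hGb v i).symm
  -- Step 3: measure of each cylinder
  have hhalf : ∀ (z : ZMod N) (u : Bool), P (X z ⁻¹' {u}) = 2⁻¹ := by
    intro z u
    have htrue : P (X z ⁻¹' {true}) = 2⁻¹ := by
      have : X z ⁻¹' {true} = {ω | X z ω = true} := by ext ω; simp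
      rw [this, hber z, one_div]
    cases u
    · have hcompl : X z ⁻¹' {false} = (X z ⁻¹' {true})ᶜ := by
        ext ω; simp
      rw [hcompl, measure_compl ((hmeas z) (measurableSet_singleton _)) (measure_ne_top _ _),
        htrue, measure_univ, ENNReal.one_sub_inv_two]
    · exact htrue
  have hcylmeas : ∀ v, P (Cyl v) = 2⁻¹ ^ (k + k) := by
    intro v
    rw [hCyl]
    have := hindep.measure_inter_preimage_eq_mul S
      (sets := fun z => ({G v z} : Set Bool)) (fun i _ => measurableSet_singleton _)
    rw [this]
    rw [Finset.prod_congr rfl (fun z _ => hhalf z (G v z)), Finset.prod_const, hScard]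
  -- Step 4: cardinality of V
  have hVcard : V.card ≤ 2 ^ (k + 1) := by
    have hinj : Set.InjOn
        (fun v : Fin k → Bool × Bool => (xor (v i0).2 (v i0).1, fun i => (v i).1))
        ↑V := by
      intro v hv v' hv' h
      rw [hV, Finset.coe_filter] at hv hv'
      have hv1 := hv.2; have hv2 := hv'.2
      have h1 : xor (v i0).2 (v i0).1 = xor (v' i0).2 (v' i0).1 := congrArg Prod.fst h
      have h2 : ∀ i, (v i).1 = (v' i).1 := fun i => congrFun (congrArg Prod.snd h) i
      funext i
      have e1 : (v i).2 = xor (xor (v i).2 (v i).1) (v i).1 := (xor_cancel_right' _ _ true).symm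
      have e2 : (v' i).2 = xor (xor (v' i).2 (v' i).1) (v' i).1 :=
        (xor_cancel_right' _ _ true).symm
      have : (v i).2 = (v' i).2 := by
        rw [e1, e2, hv1 i, hv2 i, h1, h2 i]
      exact Prod.ext (h2 i) this
    calc V.card ≤ Fintype.card (Bool × (Fin k → Bool)) := by
          have := Finset.card_le_card_of_injOn _ (fun v _ => Finset.mem_univ _) hinj
          simpa using this
    _ = 2 ^ (k + 1) := by
          simp [Fintype.card_prod, Fintype.card_fun]
          ring
  -- put everything together
  calc P {ω | Stabilizes (fun t => evolveC N (fun _ => phi6) (fun j => X j ω) t 0)}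
      ≤ P (⋃ v ∈ V, Cyl v) := measure_mono (hsub.trans hcover)
    _ ≤ ∑ v ∈ V, P (Cyl v) := measure_biUnion_finset_le V Cyl
    _ = V.card * 2⁻¹ ^ (k + k) := by
        rw [Finset.sum_congr rfl (fun v _ => hcylmeas v), Finset.sum_const, nsmul_eq_mul]
    _ ≤ 2 ^ (k + 1) * 2⁻¹ ^ (k + k) := by
        gcongr
        exact_mod_cast Nat.cast_le.mpr hVcard
    _ = 2 * 2⁻¹ ^ k := by
        rw [pow_succ, pow_add]
        have hcancel : (2 : ℝ≥0∞) ^ k * 2⁻¹ ^ k = 1 := by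
          rw [← mul_pow, ENNReal.mul_inv_cancel (by norm_num) (by norm_num), one_pow]
        calc (2 : ℝ≥0∞) ^ k * 2 * (2⁻¹ ^ k * 2⁻¹ ^ k)
            = (2 ^ k * 2⁻¹ ^ k) * (2 * 2⁻¹ ^ k) := by ring
          _ = 2 * 2⁻¹ ^ k := by rw [hcancel, one_mul]

/-- for the φ6-CA on the circle of size `N` with i.i.d. Bernoulli(1/2)
initial states, the probability `σ_N` that cell 0 stabilizes satisfies
`liminf_{N→∞} σ_N = 0` and `limsup_{N→∞} σ_N = 1`. -/
theorem stmt3 {Ω : ℕ → Type*} [∀ N, MeasurableSpace (Ω N)]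
    (P : ∀ N, Measure (Ω N)) [∀ N, IsProbabilityMeasure (P N)]
    (X : ∀ N, ZMod N → Ω N → Bool)
    (hmeas : ∀ N i, Measurable (X N i))
    (hindep : ∀ N, iIndepFun (X N) (P N))
    (hber : ∀ N i, P N {ω | X N i ω = true} = 1/2) :
    liminf (fun N => P N {ω | Stabilizes
        (fun t => evolveC N (fun _ => phi6) (fun j => X N j ω) t 0)}) atTop = 0 ∧
    limsup (fun N => P N {ω | Stabilizes
        (fun t => evolveC N (fun _ => phi6) (fun j => X N j ω) t 0)}) atTop = 1 := by
  set σ : ℕ → ℝ≥0∞ := fun N => P N {ω | Stabilizes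
      (fun t => evolveC N (fun _ => phi6) (fun j => X N j ω) t 0)} with hσ
  constructor
  · -- liminf = 0
    have hbound : ∀ k : ℕ, 1 ≤ k → liminf σ atTop ≤ 2 * 2⁻¹ ^ k := by
      intro k hk
      apply liminf_le_of_frequently_le'
      rw [frequently_atTop]
      intro n
      set k' : ℕ := max k n with hk'
      refine ⟨2 ^ k' + 1, ?_, ?_⟩
      · have : n ≤ 2 ^ k' := le_trans (le_max_right k n) (Nat.lt_two_pow_self (n := k')).le
        omega
      · calc σ (2 ^ k' + 1) ≤ 2 * 2⁻¹ ^ k' := by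
              apply key_bound (P (2 ^ k' + 1)) k' (le_trans hk (le_max_left k n)) rfl
                (X (2 ^ k' + 1)) (hmeas _) (hindep _) (hber _)
          _ ≤ 2 * 2⁻¹ ^ k := by
              have := pow_le_pow_of_le_one (zero_le : (0 : ℝ≥0∞) ≤ 2⁻¹)
                (ENNReal.inv_le_one.mpr one_le_two) (le_max_left k n)
              exact mul_le_mul_right this 2
    by_contra h
    obtain ⟨n, hn⟩ := ENNReal.exists_inv_two_pow_lt h
    have h1 : liminf σ atTop ≤ 2 * 2⁻¹ ^ (n + 1) := hbound (n + 1) (by omega)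
    have h2 : (2 : ℝ≥0∞) * 2⁻¹ ^ (n + 1) = 2⁻¹ ^ n := by
      rw [pow_succ]
      calc (2 : ℝ≥0∞) * (2⁻¹ ^ n * 2⁻¹) = (2 * 2⁻¹) * 2⁻¹ ^ n := by ring
        _ = 2⁻¹ ^ n := by rw [ENNReal.mul_inv_cancel (by norm_num) (by norm_num), one_mul]
    rw [h2] at h1
    exact absurd (lt_of_le_of_lt h1 hn) (lt_irrefl _)
  · -- limsup = 1
    apply le_antisymm
    · apply limsup_le_of_le (by isBoundedDefault)
      exact Eventually.of_forall (fun N => prob_le_one)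
    · apply le_limsup_of_frequently_le'
      rw [frequently_atTop]
      intro n
      refine ⟨2 ^ n, (Nat.lt_two_pow_self (n := n)).le, ?_⟩
      have : σ (2 ^ n) = 1 := by
        show (P (2 ^ n)) {ω | Stabilizes
            (fun t => evolveC (2 ^ n) (fun _ => phi6) (fun j => X (2 ^ n) j ω) t 0)} = 1
        have huniv : {ω | Stabilizes
            (fun t => evolveC (2 ^ n) (fun _ => phi6) (fun j => X (2 ^ n) j ω) t 0)}
            = Set.univ := by
          ext ω
          simp only [Set.mem_setOf_eq, Set.mem_univ, iff_true]
          exact pow2_stabilizes n (fun j => X (2 ^ n) j ω)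
        rw [huniv, measure_univ]
      rw [this]
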